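/- Let n ≥ 4 be even and 1 ≤ z ≤ ⌊(n-1)/2⌋. Let x : Fin n → ℝ be sorted and let y = x_{n/2} (the left median). Then OPT_SC(y, x, z) ≤ (n/(n - 2z)) · OPT*_SC(x, z). -/

import Mathlib

/-- Utilitarian social cost with `z` outliers of placing the facility at `y`:
minimum over sets `S` of `n - z` non-outliers of the total distance. -/
noncomputable def OPTsc (n z : ℕ) (x : Fin n → ℝ) (y : ℝ) : ℝ :=
  sInf {c : ℝ | ∃ S : Finset (Fin n), S.card = n - z ∧ c = ∑ i ∈ S, |y - x i|}

/-- Optimal utilitarian social cost with `z` outliers. -/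
noncomputable def OPTscStar (n z : ℕ) (x : Fin n → ℝ) : ℝ :=
  sInf (Set.range (OPTsc n z x))

/-!
Fix a set `S` of `n - z` agents and a location `y`, say `y ≤ m` with `m` the left median, and
put `d = m - y`. Removing `z` agents leaves `a ≥ n/2 - z` agents of `S` at or right of `m`; each
of them is exactly `d` farther from `y` than from `m`, every other agent at most `d` closer. So
`cost_S(m) ≤ cost_S(y) + (#S - 2a) d`, while those `a` agents alone give `a d ≤ cost_S(y)`.
Together `(n/2 - z) · cost_S(m) ≤ (n/2) · cost_S(y)`; minimising over `S` and `y` gives the bound.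
-/

open Finset

section SumAbsSub

variable {ι : Type*} (S : Finset ι) (x : ι → ℝ) {m y : ℝ}

lemma sum_abs_sub_add_le_of_le (hy : y ≤ m) :
    ∑ i ∈ S, |m - x i| + 2 * (m - y) * #{i ∈ S | m ≤ x i} ≤
      ∑ i ∈ S, |y - x i| + #S * (m - y) := by
  have pointwise : ∀ i ∈ S,
      |m - x i| + 2 * (m - y) * (if m ≤ x i then 1 else 0) ≤ |y - x i| + (m - y) := by
    intro i _
    split_ifs with h
    · rw [abs_of_nonpos (by linarith), abs_of_nonpos (by linarith)]
      linarith
    · have := abs_sub_le m y (x i)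
      rw [abs_of_nonneg (sub_nonneg.2 hy)] at this
      linarith
  have := sum_le_sum pointwise
  rwa [sum_add_distrib, sum_add_distrib, ← mul_sum, sum_boole, sum_const, nsmul_eq_mul] at this

lemma card_filter_mul_le_sum_abs_sub (hy : y ≤ m) :
    #{i ∈ S | m ≤ x i} * (m - y) ≤ ∑ i ∈ S, |y - x i| := by
  have pointwise : ∀ i ∈ S, (if m ≤ x i then 1 else 0) * (m - y) ≤ |y - x i| := by
    intro i _
    split_ifs with h
    · rw [one_mul, abs_of_nonpos (by linarith)]
      linarith
    · rw [zero_mul]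
      exact abs_nonneg _
  have := sum_le_sum pointwise
  rwa [← sum_mul, sum_boole] at this

lemma mul_sum_abs_sub_le_of_le (hy : y ≤ m) {a : ℕ} (ha : a ≤ #{i ∈ S | m ≤ x i})
    (h2a : 2 * a ≤ #S) :
    a * ∑ i ∈ S, |m - x i| ≤ (#S - a) * ∑ i ∈ S, |y - x i| := by
  have hsum := sum_abs_sub_add_le_of_le S x hy
  have hcard := card_filter_mul_le_sum_abs_sub S x hy
  have ha' : (a : ℝ) ≤ #{i ∈ S | m ≤ x i} := by exact_mod_cast ha
  have h2a' : 2 * (a : ℝ) ≤ #S := by exact_mod_cast h2a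
  have hd : 0 ≤ m - y := sub_nonneg.2 hy
  nlinarith [mul_le_mul_of_nonneg_left ha' (mul_nonneg (Nat.cast_nonneg' a) hd),
    mul_le_mul_of_nonneg_right ha' hd, mul_le_mul_of_nonneg_right h2a' hd]

lemma mul_sum_abs_sub_le {a : ℕ} (hge : a ≤ #{i ∈ S | m ≤ x i})
    (hle : a ≤ #{i ∈ S | x i ≤ m}) (h2a : 2 * a ≤ #S) (y : ℝ) :
    a * ∑ i ∈ S, |m - x i| ≤ (#S - a) * ∑ i ∈ S, |y - x i| := by
  rcases le_total y m with hy | hy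
  · exact mul_sum_abs_sub_le_of_le S x hy hge h2a
  · have hle' : a ≤ #{i ∈ S | -m ≤ -x i} := by simpa only [neg_le_neg_iff] using hle
    simpa only [neg_sub_neg, abs_sub_comm (x _)] using
      mul_sum_abs_sub_le_of_le S (-x ·) (neg_le_neg hy) hle' h2a

end SumAbsSub

lemma card_filter_le_card_filter_add_card_compl {ι : Type*} [Fintype ι] [DecidableEq ι]
    (S : Finset ι) (p : ι → Prop) [DecidablePred p] :
    #{i | p i} ≤ #{i ∈ S | p i} + #Sᶜ := by
  calc #{i | p i} ≤ #({i ∈ S | p i} ∪ Sᶜ) := by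
        refine card_le_card fun i hi => ?_
        by_cases h : i ∈ S <;> simp_all
    _ ≤ _ := card_union_le _ _

section OPTsc

variable {n z : ℕ} {x : Fin n → ℝ}

lemma OPTsc_le_sum (y : ℝ) {S : Finset (Fin n)} (hS : #S = n - z) :
    OPTsc n z x y ≤ ∑ i ∈ S, |y - x i| :=
  csInf_le ⟨0, by rintro c ⟨S, -, rfl⟩; positivity⟩ ⟨S, hS, rfl⟩

lemma le_OPTsc {y c : ℝ} (h : ∀ S : Finset (Fin n), #S = n - z → c ≤ ∑ i ∈ S, |y - x i|) :
    c ≤ OPTsc n z x y := by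
  obtain ⟨S, -, hS⟩ := exists_subset_card_eq (s := (univ : Finset (Fin n))) (n := n - z)
    (by simp)
  refine le_csInf ⟨_, S, hS, rfl⟩ ?_
  rintro _ ⟨S, hS, rfl⟩
  exact h S hS

lemma OPTsc_le_div_mul_OPTscStar {m b c : ℝ} (hb : 0 < b) (hc : 0 < c)
    (h : ∀ (y : ℝ) (S : Finset (Fin n)), #S = n - z →
      b * ∑ i ∈ S, |m - x i| ≤ c * ∑ i ∈ S, |y - x i|) :
    OPTsc n z x m ≤ c / b * OPTscStar n z x := by
  have hstar : b / c * OPTsc n z x m ≤ OPTscStar n z x := by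
    refine le_csInf (Set.range_nonempty _) ?_
    rintro _ ⟨y, rfl⟩
    refine le_OPTsc fun S hS => ?_
    rw [div_mul_eq_mul_div, div_le_iff₀ hc, mul_comm _ c]
    exact (mul_le_mul_of_nonneg_left (OPTsc_le_sum m hS) hb.le).trans (h y S hS)
  calc OPTsc n z x m = c / b * (b / c * OPTsc n z x m) := by field_simp
    _ ≤ c / b * OPTscStar n z x := by gcongr

end OPTsc

theorem stmt_11 (n z : ℕ) (hn : 4 ≤ n) (heven : Even n) (hz2 : z ≤ (n - 1) / 2)
    (x : Fin n → ℝ) (hx : Monotone x) :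
    OPTsc n z x (x ⟨n / 2 - 1, by omega⟩) ≤
      ((n : ℝ) / ((n : ℝ) - 2 * z)) * OPTscStar n z x := by
  obtain ⟨k, rfl⟩ := heven
  set j : Fin (k + k) := ⟨(k + k) / 2 - 1, by omega⟩
  have hj : (j : ℕ) + 1 = k := by simp only [j]; omega
  have hzk : (z : ℝ) + 1 ≤ k := by exact_mod_cast (show z + 1 ≤ k by omega)
  refine OPTsc_le_div_mul_OPTscStar (by push_cast; linarith) (by positivity) fun y S hS => ?_
  have hcompl : #Sᶜ = z := by rw [card_compl, hS, Fintype.card_fin]; omega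
  have hge : k - z ≤ #{i ∈ S | x j ≤ x i} := by
    have hIci : #(Ici j) ≤ #{i | x j ≤ x i} :=
      card_le_card fun i hi => by simpa using hx (mem_Ici.1 hi)
    have := card_filter_le_card_filter_add_card_compl S (fun i => x j ≤ x i)
    rw [Fin.card_Ici] at hIci
    omega
  have hle : k - z ≤ #{i ∈ S | x i ≤ x j} := by
    have hIic : #(Iic j) ≤ #{i | x i ≤ x j} :=
      card_le_card fun i hi => by simpa using hx (mem_Iic.1 hi)
    have := card_filter_le_card_filter_add_card_compl S (fun i => x i ≤ x j)
    rw [Fin.card_Iic] at hIic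
    omega
  have key := mul_sum_abs_sub_le S x hge hle (by omega) y
  rw [hS, Nat.cast_sub (by omega), Nat.cast_sub (by omega)] at key
  push_cast at key ⊢
  nlinarith [key]
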